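/- Under the hypotheses of the previous theorem (homogeneous X, Y of diameter ≤ 2 with N_X'(1) + N_Y'(1) = 2), the small-scale limit satisfies lim_{t→0+}|t(X*Y)| = (N_X''(1) + N_Y''(1)) / (N_X''(1) + N_Y''(1) − (1/2)(N_X'(1) − N_Y'(1))²), and the denominator is strictly positive. -/

import Mathlib

open Filter Topology

/-- `N_X(q) = (1/#X)·Σ_{x'} q^{d(x,x')}` for a basepoint `x`. -/
noncomputable def Nfun {X : Type*} [Fintype X] [MetricSpace X] (x : X) (q : ℝ) : ℝ :=
  (1 / (Fintype.card X : ℝ)) * ∑ x' : X, q ^ dist x x'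

/-- The distance function on the join `X * Y` (cross-distances `1`). -/
noncomputable def joinDist {X Y : Type*} [MetricSpace X] [MetricSpace Y] :
    X ⊕ Y → X ⊕ Y → ℝ
  | Sum.inl a, Sum.inl b => dist a b
  | Sum.inr a, Sum.inr b => dist a b
  | _, _ => 1

/-- derivative function of `Nfun`. -/
noncomputable def Nd {X : Type*} [Fintype X] [MetricSpace X] (x : X) (q : ℝ) : ℝ :=
  (1 / (Fintype.card X : ℝ)) * ∑ x' : X, dist x x' * q ^ (dist x x' - 1)

lemma hasDerivAt_Nfun {X : Type*} [Fintype X] [MetricSpace X] (x : X) {q : ℝ} (hq : q ≠ 0) :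
    HasDerivAt (Nfun x) (Nd x q) q := by
  unfold Nfun Nd
  exact (HasDerivAt.fun_sum fun i _ => Real.hasDerivAt_rpow_const (Or.inl hq)).const_mul _

lemma hasDerivAt_Nd {X : Type*} [Fintype X] [MetricSpace X] (x : X) {q : ℝ} (hq : q ≠ 0) :
    HasDerivAt (Nd x)
      ((1 / (Fintype.card X : ℝ)) *
        ∑ x' : X, dist x x' * ((dist x x' - 1) * q ^ (dist x x' - 1 - 1))) q := by
  unfold Nd
  exact (HasDerivAt.fun_sum fun i _ =>
    (Real.hasDerivAt_rpow_const (Or.inl hq)).const_mul _).const_mul _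

lemma Nfun_one {X : Type*} [Fintype X] [MetricSpace X] [Nonempty X] (x : X) : Nfun x 1 = 1 := by
  have : (Fintype.card X : ℝ) ≠ 0 := Nat.cast_ne_zero.2 Fintype.card_ne_zero
  simp [Nfun, Real.one_rpow, this]

lemma deriv_Nfun_eq {X : Type*} [Fintype X] [MetricSpace X] (x : X) :
    deriv (Nfun x) 1 = (1 / (Fintype.card X : ℝ)) * ∑ x' : X, dist x x' := by
  rw [(hasDerivAt_Nfun x one_ne_zero).deriv]
  simp [Nd, Real.one_rpow]

lemma deriv2_Nfun_eq {X : Type*} [Fintype X] [MetricSpace X] (x : X) :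
    deriv (deriv (Nfun x)) 1
      = (1 / (Fintype.card X : ℝ)) * ∑ x' : X, dist x x' * (dist x x' - 1) := by
  have hev : deriv (Nfun x) =ᶠ[𝓝 (1:ℝ)] Nd x := by
    filter_upwards [isOpen_Ioi.mem_nhds (by norm_num : (1:ℝ) ∈ Set.Ioi (0:ℝ))] with q hq
    exact (hasDerivAt_Nfun x (ne_of_gt hq)).deriv
  rw [hev.deriv_eq, (hasDerivAt_Nd x one_ne_zero).deriv]
  simp [Real.one_rpow]

lemma sum_dist_invariant {X : Type*} [Fintype X] [MetricSpace X]
    (hX : ∀ a b : X, ∃ e : X ≃ᵢ X, e a = b) (x0 a : X) (f : ℝ → ℝ) :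
    ∑ x' : X, f (dist a x') = ∑ x' : X, f (dist x0 x') := by
  obtain ⟨e, he⟩ := hX x0 a
  rw [← he, ← Equiv.sum_comp e.toEquiv (fun x' => f (dist (e x0) x'))]
  simp [e.dist_eq]

/-- mean square minus square mean is at least `A²/n` (variance bound using the `x0` term). -/
lemma var_bound {X : Type*} [Fintype X] [MetricSpace X] [Nonempty X] (x0 : X) :
    deriv (deriv (Nfun x0)) 1 ≥ (deriv (Nfun x0) 1)^2 - deriv (Nfun x0) 1
      + (deriv (Nfun x0) 1)^2 / (Fintype.card X : ℝ) := by
  set n : ℝ := (Fintype.card X : ℝ) with hn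
  have hnpos : (0:ℝ) < n := by
    simp [hn, Nat.cast_pos, Fintype.card_pos]
  set A : ℝ := deriv (Nfun x0) 1 with hA
  rw [deriv2_Nfun_eq]
  rw [deriv_Nfun_eq] at hA
  -- key: ∑ (d - A)^2 ≥ A^2  (the x0 term gives (0 - A)^2 = A^2)
  have key : ∑ x' : X, (dist x0 x' - A)^2 ≥ A^2 := by
    have := Finset.single_le_sum (f := fun x' : X => (dist x0 x' - A)^2)
      (fun i _ => sq_nonneg _) (Finset.mem_univ x0)
    simpa using this
  have expand : ∑ x' : X, (dist x0 x' - A)^2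
      = (∑ x' : X, (dist x0 x')^2) - 2 * A * (∑ x' : X, dist x0 x') + n * A^2 := by
    have h : ∀ x' : X, (dist x0 x' - A)^2
        = (dist x0 x')^2 - 2*A*(dist x0 x') + A^2 := fun _ => by ring
    simp_rw [h, Finset.sum_add_distrib, Finset.sum_sub_distrib, ← Finset.mul_sum,
      Finset.sum_const, Finset.card_univ, nsmul_eq_mul]
    rfl
  set S1 : ℝ := ∑ x' : X, dist x0 x' with hS1def
  set S2 : ℝ := ∑ x' : X, (dist x0 x')^2 with hS2def
  have hS1 : S1 = n * A := by rw [hA]; field_simp; rfl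
  have hsum : ∑ x' : X, dist x0 x' * (dist x0 x' - 1) = S2 - S1 := by
    have h : ∀ x' : X, dist x0 x' * (dist x0 x' - 1)
        = (dist x0 x')^2 - dist x0 x' := fun _ => by ring
    simp_rw [h, Finset.sum_sub_distrib]
    rfl
  rw [hsum]
  have hAS1 : A * S1 = n * A^2 := by rw [hS1]; ring
  have h2 : S2 - S1 ≥ n*(A^2 - A) + A^2 := by nlinarith [key, expand, hS1, hAS1]
  calc (1/n)*(S2 - S1) ≥ (1/n)*(n*(A^2-A)+A^2) := by
        apply mul_le_mul_of_nonneg_left h2 (by positivity)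
    _ = A^2 - A + A^2/n := by field_simp

lemma D_pos {X Y : Type*} [Fintype X] [Fintype Y] [MetricSpace X] [MetricSpace Y]
    [Nonempty X] [Nonempty Y] (x0 : X) (y0 : Y)
    (hcond : deriv (Nfun x0) 1 + deriv (Nfun y0) 1 = 2) :
    0 < deriv (deriv (Nfun x0)) 1 + deriv (deriv (Nfun y0)) 1
          - (1 / 2) * (deriv (Nfun x0) 1 - deriv (Nfun y0) 1) ^ 2 := by
  have h1 := var_bound x0
  have h2 := var_bound y0
  set A : ℝ := deriv (Nfun x0) 1
  set B : ℝ := deriv (Nfun y0) 1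
  set n : ℝ := (Fintype.card X : ℝ) with hn
  set m : ℝ := (Fintype.card Y : ℝ) with hm
  have hnpos : (0:ℝ) < n := by simp [hn, Nat.cast_pos, Fintype.card_pos]
  have hmpos : (0:ℝ) < m := by simp [hm, Nat.cast_pos, Fintype.card_pos]
  have hab : A^2/n + B^2/m > 0 := by
    rcases eq_or_ne A 0 with hA0 | hA0
    · have hB : B = 2 := by linarith
      have e1 : B^2/m > 0 := by rw [hB]; positivity
      have e2 : A^2/n ≥ 0 := by positivity
      linarith
    · have e1 : A^2/n > 0 := by positivity
      have e2 : B^2/m ≥ 0 := by positivity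
      linarith
  have hsq : A^2 + 2*(A*B) + B^2 = 4 := by nlinarith [hcond]
  nlinarith [h1, h2, hab, hcond, hsq]

lemma joinDist_self {X Y : Type*} [MetricSpace X] [MetricSpace Y] (a : X ⊕ Y) :
    joinDist a a = 0 := by
  cases a <;> simp [joinDist]

lemma joinDist_pos {X Y : Type*} [MetricSpace X] [MetricSpace Y] {a b : X ⊕ Y} (h : a ≠ b) :
    0 < joinDist a b := by
  cases a <;> cases b <;> simp_all [joinDist, dist_pos]

section Det

variable {X Y : Type*} [Fintype X] [Fintype Y] [DecidableEq X] [DecidableEq Y]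
    [MetricSpace X] [MetricSpace Y]

lemma analytic_det :
    AnalyticOnNhd ℝ
      (fun t : ℝ => (Matrix.of fun a b : X ⊕ Y => Real.exp (-t * joinDist a b)).det)
      Set.univ := by
  intro t _
  simp only [Matrix.det_apply']
  apply Finset.analyticAt_fun_sum
  intro σ _
  apply AnalyticAt.mul analyticAt_const
  apply Finset.analyticAt_fun_prod
  intro i _
  exact analyticAt_rexp.comp ((analyticAt_id.neg).mul analyticAt_const)

lemma tendsto_det_atTop :
    Tendsto (fun t : ℝ => (Matrix.of fun a b : X ⊕ Y => Real.exp (-t * joinDist a b)).det)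
      atTop (𝓝 1) := by
  have hM : Tendsto (fun t : ℝ => (Matrix.of fun a b : X ⊕ Y => Real.exp (-t * joinDist a b)))
      atTop (𝓝 (1 : Matrix (X ⊕ Y) (X ⊕ Y) ℝ)) := by
    refine tendsto_pi_nhds.2 ?_
    intro a
    rw [tendsto_pi_nhds]
    intro b
    rcases eq_or_ne a b with rfl | hab
    · simp [joinDist_self, Matrix.one_apply_eq]
    · have hd : 0 < joinDist a b := joinDist_pos hab
      have h1 : Tendsto (fun t : ℝ => joinDist a b * t) atTop atTop :=
        Tendsto.const_mul_atTop hd tendsto_id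
      have h2 : Tendsto (fun t : ℝ => Real.exp (-(joinDist a b * t))) atTop (𝓝 0) :=
        Real.tendsto_exp_atBot.comp (tendsto_neg_atBot_iff.mpr h1)
      simp only [Matrix.one_apply_ne hab, Matrix.of_apply]
      convert h2 using 2 with t
      ring
  have hdet : Continuous fun M : Matrix (X ⊕ Y) (X ⊕ Y) ℝ => M.det :=
    Continuous.matrix_det continuous_id
  have := (hdet.tendsto (1 : Matrix (X ⊕ Y) (X ⊕ Y) ℝ)).comp hM
  simpa [Matrix.det_one, Function.comp_def] using this

lemma eventually_det_ne_zero :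
    ∀ᶠ t in 𝓝[>] (0:ℝ),
      (Matrix.of fun a b : X ⊕ Y => Real.exp (-t * joinDist a b)).det ≠ 0 := by
  set f := fun t : ℝ => (Matrix.of fun a b : X ⊕ Y => Real.exp (-t * joinDist a b)).det with hf
  have hA : AnalyticOnNhd ℝ f Set.univ := analytic_det
  have hT : ∃ T : ℝ, f T ≠ 0 := by
    have := (tendsto_det_atTop (X := X) (Y := Y)).eventually_ne (one_ne_zero)
    exact this.exists
  rcases (hA 0 trivial).eventually_eq_zero_or_eventually_ne_zero with h | h
  · exfalso
    obtain ⟨T, hTne⟩ := hT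
    have := hA.eqOn_zero_of_preconnected_of_eventuallyEq_zero isPreconnected_univ
      (Set.mem_univ 0) h (Set.mem_univ T)
    exact hTne this
  · exact h.filter_mono (nhdsWithin_mono _ fun x hx => ne_of_gt hx)

end Det

lemma exp_neg_mul_eq_rpow (t d : ℝ) : Real.exp (-t * d) = Real.exp (-t) ^ d := by
  rw [Real.rpow_def_of_pos (Real.exp_pos _), Real.log_exp]

lemma row_sum {X : Type*} [Fintype X] [MetricSpace X]
    (hX : ∀ a b : X, ∃ e : X ≃ᵢ X, e a = b) (x0 a : X) (q : ℝ) :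
    ∑ x' : X, q ^ dist a x' = (Fintype.card X : ℝ) * Nfun x0 q := by
  have hn : (Fintype.card X : ℝ) ≠ 0 :=
    Nat.cast_ne_zero.2 (@Fintype.card_ne_zero _ _ ⟨x0⟩)
  rw [sum_dist_invariant hX x0 a (fun r => q ^ r)]
  rw [Nfun]
  field_simp

section LinAlg
open Matrix

variable {X Y : Type*} [Fintype X] [Fintype Y] [DecidableEq X] [DecidableEq Y]
    [MetricSpace X] [MetricSpace Y] [Nonempty X] [Nonempty Y]

lemma sum_inv_eq
    (hX : ∀ a b : X, ∃ e : X ≃ᵢ X, e a = b) (hY : ∀ a b : Y, ∃ e : Y ≃ᵢ Y, e a = b)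
    (x0 : X) (y0 : Y) (t : ℝ)
    (hdet : (Matrix.of fun a b : X ⊕ Y => Real.exp (-t * joinDist a b)).det ≠ 0)
    (hΔ : Nfun x0 (Real.exp (-t)) * Nfun y0 (Real.exp (-t)) - (Real.exp (-t))^2 ≠ 0) :
    ∑ a, ∑ b, (Matrix.of fun a b : X ⊕ Y => Real.exp (-t * joinDist a b))⁻¹ a b
      = (Nfun x0 (Real.exp (-t)) + Nfun y0 (Real.exp (-t)) - 2 * Real.exp (-t))
        / (Nfun x0 (Real.exp (-t)) * Nfun y0 (Real.exp (-t)) - (Real.exp (-t))^2) := by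
  set c : ℝ := Real.exp (-t) with hc
  set NX : ℝ := Nfun x0 c with hNX
  set NY : ℝ := Nfun y0 c with hNY
  set Δ : ℝ := NX * NY - c^2 with hΔdef
  set n : ℝ := (Fintype.card X : ℝ) with hn
  set m : ℝ := (Fintype.card Y : ℝ) with hm
  have hnne : n ≠ 0 := Nat.cast_ne_zero.2 Fintype.card_ne_zero
  have hmne : m ≠ 0 := Nat.cast_ne_zero.2 Fintype.card_ne_zero
  set M : Matrix (X ⊕ Y) (X ⊕ Y) ℝ :=
    Matrix.of fun a b : X ⊕ Y => Real.exp (-t * joinDist a b) with hM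
  set w : X ⊕ Y → ℝ :=
    Sum.elim (fun _ : X => (NY - c) / (Δ * n)) (fun _ : Y => (NX - c) / (Δ * m)) with hw
  have hMw : M *ᵥ w = fun _ => 1 := by
    funext a
    cases a with
    | inl x =>
      simp only [Matrix.mulVec, dotProduct, Fintype.sum_sum_type, hM, Matrix.of_apply,
        hw, Sum.elim_inl, Sum.elim_inr]
      have e1 : ∀ x' : X, Real.exp (-t * joinDist (Sum.inl x : X ⊕ Y) (Sum.inl x')) = c ^ dist x x' := by
        intro x'; rw [show joinDist (Sum.inl x : X ⊕ Y) (Sum.inl x') = dist x x' from rfl,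
          exp_neg_mul_eq_rpow]
      have e2 : ∀ y' : Y, Real.exp (-t * joinDist (Sum.inl x : X ⊕ Y) (Sum.inr y')) = c := by
        intro y'; rw [show joinDist (Sum.inl x : X ⊕ Y) (Sum.inr y') = (1:ℝ) from rfl]
        simp [hc]
      simp only [e1, e2, ← Finset.sum_mul]
      rw [row_sum hX x0 x c]
      rw [Finset.sum_const, Finset.card_univ, nsmul_eq_mul]
      rw [← hNX, ← hn, ← hm]
      field_simp
      ring
    | inr y =>
      simp only [Matrix.mulVec, dotProduct, Fintype.sum_sum_type, hM, Matrix.of_apply,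
        hw, Sum.elim_inl, Sum.elim_inr]
      have e1 : ∀ y' : Y, Real.exp (-t * joinDist (Sum.inr y : X ⊕ Y) (Sum.inr y')) = c ^ dist y y' := by
        intro y'; rw [show joinDist (Sum.inr y : X ⊕ Y) (Sum.inr y') = dist y y' from rfl,
          exp_neg_mul_eq_rpow]
      have e2 : ∀ x' : X, Real.exp (-t * joinDist (Sum.inr y : X ⊕ Y) (Sum.inl x')) = c := by
        intro x'; rw [show joinDist (Sum.inr y : X ⊕ Y) (Sum.inl x') = (1:ℝ) from rfl]
        simp [hc]
      simp only [e1, e2, ← Finset.sum_mul]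
      rw [row_sum hY y0 y c]
      rw [Finset.sum_const, Finset.card_univ, nsmul_eq_mul]
      rw [← hNY, ← hn, ← hm]
      field_simp
      ring
  have hunit : IsUnit M.det := isUnit_iff_ne_zero.2 hdet
  have hinv : M⁻¹ *ᵥ (M *ᵥ w) = w := by
    rw [Matrix.mulVec_mulVec, Matrix.nonsing_inv_mul M hunit, Matrix.one_mulVec]
  have hsum : ∀ a, ∑ b, M⁻¹ a b = w a := by
    intro a
    have : (M⁻¹ *ᵥ (fun _ => 1)) a = w a := by rw [← hMw, hinv]
    rw [← this]
    simp [Matrix.mulVec, dotProduct]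
  calc ∑ a, ∑ b, M⁻¹ a b = ∑ a, w a := by
        exact Finset.sum_congr rfl fun a _ => hsum a
    _ = (NX + NY - 2 * c) / Δ := by
        rw [Fintype.sum_sum_type]
        simp only [hw, Sum.elim_inl, Sum.elim_inr, Finset.sum_const, Finset.card_univ,
          nsmul_eq_mul, ← hn, ← hm]
        field_simp
        ring

end LinAlg

section Limits

lemma hasDerivAt_Nfun_one {X : Type*} [Fintype X] [MetricSpace X] (x0 : X) :
    HasDerivAt (Nfun x0) (deriv (Nfun x0) 1) 1 := by
  have h := hasDerivAt_Nfun x0 one_ne_zero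
  rwa [h.deriv]

lemma hasDerivAt_Nd_one {X : Type*} [Fintype X] [MetricSpace X] (x0 : X) :
    HasDerivAt (Nd x0) (deriv (deriv (Nfun x0)) 1) 1 := by
  rw [deriv2_Nfun_eq]
  have h := hasDerivAt_Nd x0 one_ne_zero
  simpa [Real.one_rpow] using h

lemma Nd_one_eq {X : Type*} [Fintype X] [MetricSpace X] (x0 : X) :
    Nd x0 1 = deriv (Nfun x0) 1 := ((hasDerivAt_Nfun x0 one_ne_zero).deriv).symm

private lemma div_div_cancel_aux {a b c : ℝ} (hc : c ≠ 0) : (a / c) / (b / c) = a / b := by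
  rcases eq_or_ne b 0 with rfl | hb
  · simp
  · field_simp

/-- generic second-order L'Hôpital-type limit: if `f 1 = 0`, `f' 1 = 0` and `f'` has
derivative `L` at `1`, then `f q / (q-1)^2 → L/2` as `q → 1⁻`. -/
lemma tendsto_div_sq {f f' : ℝ → ℝ} {L : ℝ}
    (hff' : ∀ q ∈ Set.Ioo (0:ℝ) 2, HasDerivAt f (f' q) q)
    (hf'1 : HasDerivAt f' L 1) (hf1 : f 1 = 0) (hf'one : f' 1 = 0) :
    Tendsto (fun q => f q / (q - 1)^2) (𝓝[<] (1:ℝ)) (𝓝 (L / 2)) := by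
  have hmem : Set.Ioo (0:ℝ) 1 ∈ 𝓝[<] (1:ℝ) :=
    Ioo_mem_nhdsLT_of_mem (by norm_num : (1:ℝ) ∈ Set.Ioc (0:ℝ) 1)
  apply HasDerivAt.lhopital_zero_nhdsLT (f' := f') (g' := fun q => 2 * (q - 1))
  · filter_upwards [hmem] with q hq
    exact hff' q ⟨hq.1, by linarith [hq.2]⟩
  · filter_upwards with q
    simpa [mul_comm] using ((hasDerivAt_id q).sub_const 1).fun_pow 2
  · filter_upwards [hmem] with q hq
    exact mul_ne_zero two_ne_zero (by linarith [hq.2])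
  · have hc : ContinuousAt f 1 :=
      (hff' 1 (by norm_num)).continuousAt
    have := hc.tendsto.mono_left (nhdsWithin_le_nhds (s := Set.Iio (1:ℝ)))
    rwa [hf1] at this
  · have hc : Tendsto (fun q : ℝ => (q - 1)^2) (𝓝 1) (𝓝 0) := by
      have : Continuous (fun q : ℝ => (q - 1)^2) := by continuity
      simpa using this.tendsto 1
    exact hc.mono_left nhdsWithin_le_nhds
  · have hslope : Tendsto (slope f' 1) (𝓝[≠] (1:ℝ)) (𝓝 L) :=
      hasDerivAt_iff_tendsto_slope.1 hf'1
    have hmono : 𝓝[<] (1:ℝ) ≤ 𝓝[≠] (1:ℝ) :=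
      nhdsWithin_mono _ fun x hx => ne_of_lt hx
    have := (hslope.mono_left hmono).div_const 2
    apply this.congr
    intro q
    rw [slope_def_field, hf'one, sub_zero, div_div, mul_comm]

variable {X Y : Type*} [Fintype X] [Fintype Y] [MetricSpace X] [MetricSpace Y]
    [Nonempty X] [Nonempty Y]

lemma tendsto_g_div (x0 : X) (y0 : Y)
    (hcond : deriv (Nfun x0) 1 + deriv (Nfun y0) 1 = 2) :
    Tendsto (fun q => (Nfun x0 q + Nfun y0 q - 2 * q) / (q - 1)^2) (𝓝[<] (1:ℝ))
      (𝓝 ((deriv (deriv (Nfun x0)) 1 + deriv (deriv (Nfun y0)) 1) / 2)) := by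
  apply tendsto_div_sq (f' := fun q => Nd x0 q + Nd y0 q - 2)
  · intro q hq
    have h2 : HasDerivAt (fun q : ℝ => 2 * q) 2 q := by
      simpa using (hasDerivAt_id q).const_mul (2:ℝ)
    exact ((hasDerivAt_Nfun x0 (ne_of_gt hq.1)).add (hasDerivAt_Nfun y0 (ne_of_gt hq.1))).sub h2
  · exact ((hasDerivAt_Nd_one x0).add (hasDerivAt_Nd_one y0)).sub_const 2
  · norm_num [Nfun_one]
  · simp only [Nd_one_eq]
    linarith [hcond]

lemma tendsto_h_div (x0 : X) (y0 : Y)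
    (hcond : deriv (Nfun x0) 1 + deriv (Nfun y0) 1 = 2) :
    Tendsto (fun q => (Nfun x0 q * Nfun y0 q - q^2) / (q - 1)^2) (𝓝[<] (1:ℝ))
      (𝓝 ((deriv (deriv (Nfun x0)) 1 + deriv (deriv (Nfun y0)) 1
        - (1 / 2) * (deriv (Nfun x0) 1 - deriv (Nfun y0) 1) ^ 2) / 2)) := by
  set A : ℝ := deriv (Nfun x0) 1 with hA
  set B : ℝ := deriv (Nfun y0) 1 with hB
  set A2 : ℝ := deriv (deriv (Nfun x0)) 1 with hA2
  set B2 : ℝ := deriv (deriv (Nfun y0)) 1 with hB2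
  have key : A2 + B2 - (1/2) * (A - B)^2 = A2 * 1 + A * B + (A * B + 1 * B2) - 2 := by
    have h4 : (A + B)^2 = 4 := by rw [hcond]; norm_num
    nlinarith [h4]
  rw [key]
  apply tendsto_div_sq
    (f' := fun q => Nd x0 q * Nfun y0 q + Nfun x0 q * Nd y0 q - 2 * q)
  · intro q hq
    have h2 : HasDerivAt (fun q : ℝ => q^2) (2 * q) q := by
      simpa [mul_comm] using hasDerivAt_pow 2 q
    exact ((hasDerivAt_Nfun x0 (ne_of_gt hq.1)).mul (hasDerivAt_Nfun y0 (ne_of_gt hq.1))).sub h2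
  · have t1 : HasDerivAt (fun q => Nd x0 q * Nfun y0 q) (A2 * Nfun y0 1 + Nd x0 1 * B) 1 :=
      (hasDerivAt_Nd_one x0).mul (hasDerivAt_Nfun_one y0)
    have t2 : HasDerivAt (fun q => Nfun x0 q * Nd y0 q) (A * Nd y0 1 + Nfun x0 1 * B2) 1 :=
      (hasDerivAt_Nfun_one x0).mul (hasDerivAt_Nd_one y0)
    have t3 : HasDerivAt (fun q : ℝ => 2 * q) 2 1 := by
      simpa using (hasDerivAt_id (1:ℝ)).const_mul (2:ℝ)
    have := (t1.add t2).sub t3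
    refine this.congr_deriv ?_
    rw [Nfun_one, Nfun_one, Nd_one_eq, Nd_one_eq]
  · norm_num [Nfun_one]
  · simp only [Nd_one_eq, Nfun_one]
    linarith [hcond]

end Limits

section Final

variable {X Y : Type*} [Fintype X] [Fintype Y] [MetricSpace X] [MetricSpace Y]
    [Nonempty X] [Nonempty Y]

lemma tendsto_ratio (x0 : X) (y0 : Y)
    (hcond : deriv (Nfun x0) 1 + deriv (Nfun y0) 1 = 2) :
    Tendsto (fun q => (Nfun x0 q + Nfun y0 q - 2 * q) / (Nfun x0 q * Nfun y0 q - q^2))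
      (𝓝[<] (1:ℝ))
      (𝓝 ((deriv (deriv (Nfun x0)) 1 + deriv (deriv (Nfun y0)) 1) /
          (deriv (deriv (Nfun x0)) 1 + deriv (deriv (Nfun y0)) 1
            - (1 / 2) * (deriv (Nfun x0) 1 - deriv (Nfun y0) 1) ^ 2))) := by
  have hg := tendsto_g_div x0 y0 hcond
  have hh := tendsto_h_div x0 y0 hcond
  have hD := D_pos x0 y0 hcond
  have hD2 : (deriv (deriv (Nfun x0)) 1 + deriv (deriv (Nfun y0)) 1
      - (1 / 2) * (deriv (Nfun x0) 1 - deriv (Nfun y0) 1) ^ 2) / 2 ≠ 0 :=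
    ne_of_gt (by linarith)
  have hdiv := hg.div hh hD2
  rw [div_div_cancel_aux two_ne_zero] at hdiv
  apply Filter.Tendsto.congr' _ hdiv
  filter_upwards [self_mem_nhdsWithin] with q hq
  have hsq : ((q:ℝ) - 1)^2 ≠ 0 := pow_ne_zero _ (sub_ne_zero.2 (ne_of_lt hq))
  exact div_div_cancel_aux hsq

lemma eventually_h_pos (x0 : X) (y0 : Y)
    (hcond : deriv (Nfun x0) 1 + deriv (Nfun y0) 1 = 2) :
    ∀ᶠ q in 𝓝[<] (1:ℝ), 0 < Nfun x0 q * Nfun y0 q - q^2 := by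
  have hh := tendsto_h_div x0 y0 hcond
  have hD := D_pos x0 y0 hcond
  have hpos := hh.eventually (eventually_gt_nhds (by linarith :
    (0:ℝ) < (deriv (deriv (Nfun x0)) 1 + deriv (deriv (Nfun y0)) 1
      - (1 / 2) * (deriv (Nfun x0) 1 - deriv (Nfun y0) 1) ^ 2) / 2))
  filter_upwards [hpos, self_mem_nhdsWithin] with q hq hq1
  have hne : q - 1 ≠ 0 := sub_ne_zero.2 (ne_of_lt hq1)
  have hsq : (0:ℝ) < (q - 1)^2 := by positivity
  have := mul_pos hq hsq
  rwa [div_mul_cancel₀ _ (ne_of_gt hsq)] at this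

end Final

/-- For homogeneous `X`, `Y` of diameter ≤ 2 with `N_X'(1) + N_Y'(1) = 2`, the small-scale
limit of `|t(X*Y)|` is `(N_X''(1)+N_Y''(1)) / (N_X''(1)+N_Y''(1) − ½(N_X'(1)−N_Y'(1))²)`,
and the denominator is strictly positive. -/
theorem joinMag_limit_derivs {X Y : Type*} [Fintype X] [Fintype Y] [DecidableEq X] [DecidableEq Y]
    [MetricSpace X] [MetricSpace Y] [Nonempty X] [Nonempty Y]
    (hX : ∀ a b : X, ∃ e : X ≃ᵢ X, e a = b) (hY : ∀ a b : Y, ∃ e : Y ≃ᵢ Y, e a = b)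
    (hdX : ∀ a b : X, dist a b ≤ 2) (hdY : ∀ a b : Y, dist a b ≤ 2)
    (x0 : X) (y0 : Y)
    (hcond : deriv (Nfun x0) 1 + deriv (Nfun y0) 1 = 2) :
    Tendsto (fun t : ℝ => ∑ a, ∑ b,
        (Matrix.of fun a b : X ⊕ Y => Real.exp (-t * joinDist a b))⁻¹ a b)
      (𝓝[>] (0 : ℝ))
      (𝓝 ((deriv (deriv (Nfun x0)) 1 + deriv (deriv (Nfun y0)) 1) /
          (deriv (deriv (Nfun x0)) 1 + deriv (deriv (Nfun y0)) 1
            - (1 / 2) * (deriv (Nfun x0) 1 - deriv (Nfun y0) 1) ^ 2))) ∧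
    0 < deriv (deriv (Nfun x0)) 1 + deriv (deriv (Nfun y0)) 1
          - (1 / 2) * (deriv (Nfun x0) 1 - deriv (Nfun y0) 1) ^ 2 := by
  refine ⟨?_, D_pos x0 y0 hcond⟩
  have hexp : Tendsto (fun t : ℝ => Real.exp (-t)) (𝓝[>] (0:ℝ)) (𝓝[<] (1:ℝ)) := by
    apply tendsto_nhdsWithin_of_tendsto_nhds_of_eventually_within
    · have h1 : Tendsto (fun t : ℝ => Real.exp (-t)) (𝓝 0) (𝓝 1) := by
        have := (Real.continuous_exp.comp continuous_neg).tendsto 0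
        simpa [Function.comp_def] using this
      exact h1.mono_left nhdsWithin_le_nhds
    · filter_upwards [self_mem_nhdsWithin] with t ht
      have : Real.exp (-t) < Real.exp 0 := Real.exp_lt_exp.2 (by simpa using ht)
      simpa using this
  have hmain := (tendsto_ratio x0 y0 hcond).comp hexp
  apply Filter.Tendsto.congr' _ hmain
  filter_upwards [eventually_det_ne_zero (X := X) (Y := Y),
    hexp.eventually (eventually_h_pos x0 y0 hcond)] with t hdet hpos
  simp only [Function.comp_apply]
  exact (sum_inv_eq hX hY x0 y0 t hdet (ne_of_gt hpos)).symm
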